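/- arXiv:2506.07543 — 2 statements merged into one kernel-verified Lean document; each statement's English description precedes it below -/
import Mathlib

section
/- Let Ω ⊆ ℝ^n be a bounded domain, and let g : Ω → ℝ^n be measurable and injective with locally integrable Jacobian J_g > 0 a.e., satisfying the area formula ∫_A J_g dx = |g(A)| for every measurable A ⊆ Ω, and suppose ∫_Ω φ(J_g) dx ≤ C₁ where φ : (0,∞) → [0,∞) is positive, convex, and lim_{t→0+} φ(t) = ∞. Then there exists a monotone function Φ : (0,∞) → (0,∞), depending only on C₁, φ, and |Ω|, with lim_{s→0+} Φ(s) = 0, such that Φ(|A|) ≤ |g(A)| for each measurable A ⊆ Ω. -/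
open MeasureTheory Set Filter Topology
open scoped ENNReal

/-!
Since `φ(t) → ∞` as `t → 0⁺`, there are thresholds `δₖ ∈ (0, 1]` with `φ ≥ k + 1` on `(0, δₖ)`.
By Chebyshev's inequality, `∫_Ω φ(J_g) ≤ C₁` forces `|{x ∈ A | J_g x < δₖ}| ≤ C₁ / (k + 1)`,
so the area formula gives `|g(A)| = ∫_A J_g ≥ δₖ (|A| - C₁ / (k + 1))` for every `k`.
The supremum over `k` of the right-hand side is the required `Φ(|A|)`.
-/

lemma exists_pos_le_one_forall_le_of_tendsto_atTop {φ : ℝ → ℝ} (hφ : Tendsto φ (𝓝[>] 0) atTop)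
    (M : ℝ) : ∃ δ : ℝ, 0 < δ ∧ δ ≤ 1 ∧ ∀ u ∈ Ioo 0 δ, M ≤ φ u := by
  obtain ⟨u, hu, hsub⟩ :=
    mem_nhdsGT_iff_exists_Ioo_subset.1 (hφ.eventually (eventually_ge_atTop M))
  exact ⟨min u 1, lt_min hu one_pos, min_le_right _ _,
    fun v hv => hsub ⟨hv.1, hv.2.trans_le (min_le_left _ _)⟩⟩

section LowerBound

variable {α : Type*} [MeasurableSpace α] {μ : Measure α} {f : α → ℝ} {A : Set α}

lemma ofReal_mul_tsub_le_setLIntegral (hf : Measurable f) {t : ℝ} {ε : ℝ≥0∞}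
    (hsmall : μ {x ∈ A | f x < t} ≤ ε) :
    ENNReal.ofReal t * (μ A - ε) ≤ ∫⁻ x in A, ENNReal.ofReal (f x) ∂μ := by
  have hlarge : μ A - ε ≤ μ {x ∈ A | t ≤ f x} := by
    rw [tsub_le_iff_right]
    calc μ A ≤ μ {x ∈ A | t ≤ f x} + μ {x ∈ A | f x < t} :=
          (measure_mono fun x hx => by
            by_cases h : t ≤ f x
            exacts [Or.inl ⟨hx, h⟩, Or.inr ⟨hx, not_le.1 h⟩]).trans (measure_union_le _ _)
      _ ≤ μ {x ∈ A | t ≤ f x} + ε := by gcongr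
  calc ENNReal.ofReal t * (μ A - ε)
      ≤ ENNReal.ofReal t * μ {x ∈ A | t ≤ f x} := by gcongr
    _ = ∫⁻ _ in {x ∈ A | t ≤ f x}, ENNReal.ofReal t ∂μ := (setLIntegral_const _ _).symm
    _ ≤ ∫⁻ x in {x ∈ A | t ≤ f x}, ENNReal.ofReal (f x) ∂μ :=
        setLIntegral_mono (ENNReal.measurable_ofReal.comp hf)
          (fun x hx => ENNReal.ofReal_le_ofReal hx.2)
    _ ≤ ∫⁻ x in A, ENNReal.ofReal (f x) ∂μ := lintegral_mono_set (sep_subset _ _)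

lemma ofReal_mul_measure_setOf_lt_le_setLIntegral {Ω : Set α} {φ : ℝ → ℝ} {t M : ℝ}
    (hf : Measurable f) (hA : MeasurableSet A) (hAΩ : A ⊆ Ω)
    (hpos : ∀ᵐ x ∂μ.restrict Ω, 0 < f x) (hφ : ∀ u ∈ Ioo 0 t, M ≤ φ u) :
    ENNReal.ofReal M * μ {x ∈ A | f x < t} ≤ ∫⁻ x in Ω, ENNReal.ofReal (φ (f x)) ∂μ := by
  set B := {x ∈ A | f x ∈ Ioo 0 t}
  have hB : MeasurableSet B := hA.inter (hf measurableSet_Ioo)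
  have hle : μ {x ∈ A | f x < t} ≤ μ B := by
    rw [← Measure.restrict_eq_self μ ((sep_subset _ _).trans hAΩ)]
    refine (measure_mono_ae ?_).trans (Measure.restrict_le_self B)
    filter_upwards [hpos] with x hx hxA using ⟨hxA.1, hx, hxA.2⟩
  calc ENNReal.ofReal M * μ {x ∈ A | f x < t}
      ≤ ∫⁻ _ in B, ENNReal.ofReal M ∂μ := by rw [setLIntegral_const]; gcongr
    _ ≤ ∫⁻ x in B, ENNReal.ofReal (φ (f x)) ∂μ :=
        setLIntegral_mono_ae' hB (ae_of_all _ fun x hx => ENNReal.ofReal_le_ofReal (hφ _ hx.2))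
    _ ≤ ∫⁻ x in Ω, ENNReal.ofReal (φ (f x)) ∂μ :=
        lintegral_mono_set ((sep_subset _ _).trans hAΩ)

end LowerBound

noncomputable def imageVolumeLowerBound (δ : ℕ → ℝ) (C s : ℝ≥0∞) : ℝ≥0∞ :=
  ⨆ k : ℕ, ENNReal.ofReal (δ k) * (s - C / (k + 1))

section imageVolumeLowerBound

variable {δ : ℕ → ℝ} {C : ℝ≥0∞}

lemma monotone_imageVolumeLowerBound : Monotone (imageVolumeLowerBound δ C) :=
  fun _ _ hab => iSup_mono fun _ => by gcongr

lemma imageVolumeLowerBound_le (hδ : ∀ k, δ k ≤ 1) (s : ℝ≥0∞) :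
    imageVolumeLowerBound δ C s ≤ s :=
  iSup_le fun k => calc
    ENNReal.ofReal (δ k) * (s - C / (k + 1)) ≤ 1 * s :=
      mul_le_mul' (ENNReal.ofReal_le_one.2 (hδ k)) tsub_le_self
    _ = s := one_mul s

lemma tendsto_imageVolumeLowerBound (hδ : ∀ k, δ k ≤ 1) :
    Tendsto (imageVolumeLowerBound δ C) (𝓝[>] 0) (𝓝 0) :=
  tendsto_nhdsWithin_of_tendsto_nhds <|
    tendsto_of_tendsto_of_tendsto_of_le_of_le tendsto_const_nhds tendsto_id
      (fun _ => zero_le) (imageVolumeLowerBound_le hδ)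

lemma imageVolumeLowerBound_pos (hδ : ∀ k, 0 < δ k) (hC : C ≠ ∞) {s : ℝ≥0∞} (hs : 0 < s) :
    0 < imageVolumeLowerBound δ C s := by
  obtain ⟨k, hk⟩ := ENNReal.exists_nat_mul_gt hs.ne' hC
  have hCs : C / (k + 1) < s := by
    rw [ENNReal.div_lt_iff (by simp) (by simp), mul_comm]
    exact hk.trans_le (by gcongr; exact le_self_add)
  exact (ENNReal.mul_pos (by simpa using hδ k) (tsub_pos_of_lt hCs).ne').trans_le
    (le_iSup (fun k : ℕ => ENNReal.ofReal (δ k) * (s - C / (k + 1))) k)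

end imageVolumeLowerBound

theorem stmt6_general (n : ℕ) (Ω : Set (Fin n → ℝ)) (φ : ℝ → ℝ) (hφ0 : Tendsto φ (𝓝[>] 0) atTop)
    (C₁ : ℝ) :
    ∃ Φ : ℝ≥0∞ → ℝ≥0∞, Monotone Φ ∧ (∀ s, 0 < s → 0 < Φ s) ∧
      Tendsto Φ (𝓝[>] 0) (𝓝 0) ∧
      ∀ (g : (Fin n → ℝ) → (Fin n → ℝ)) (Jg : (Fin n → ℝ) → ℝ),
        Measurable g → Set.InjOn g Ω → Measurable Jg →
        (∀ᵐ x ∂(volume.restrict Ω), 0 < Jg x) →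
        (∀ A : Set (Fin n → ℝ), A ⊆ Ω → MeasurableSet A →
          ∫⁻ x in A, ENNReal.ofReal (Jg x) = volume (g '' A)) →
        (∫⁻ x in Ω, ENNReal.ofReal (φ (Jg x)) ≤ ENNReal.ofReal C₁) →
        ∀ A : Set (Fin n → ℝ), A ⊆ Ω → MeasurableSet A →
          Φ (volume A) ≤ volume (g '' A) := by
  choose δ hδpos hδle hδφ using
    fun k : ℕ => exists_pos_le_one_forall_le_of_tendsto_atTop hφ0 (k + 1)
  refine ⟨imageVolumeLowerBound δ (ENNReal.ofReal C₁), monotone_imageVolumeLowerBound,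
    fun s => imageVolumeLowerBound_pos hδpos ENNReal.ofReal_ne_top,
    tendsto_imageVolumeLowerBound hδle, ?_⟩
  intro g Jg _ _ hJ hJpos harea hφJ A hAΩ hA
  rw [← harea A hAΩ hA]
  refine iSup_le fun k => ofReal_mul_tsub_le_setLIntegral hJ ?_
  have hcheb := (ofReal_mul_measure_setOf_lt_le_setLIntegral hJ hA hAΩ hJpos (hδφ k)).trans hφJ
  rw [ENNReal.le_div_iff_mul_le (by simp) (by simp), mul_comm]
  exact_mod_cast hcheb

/-- Let `Ω ⊆ ℝⁿ` be a bounded domain and `φ : (0,∞) → [0,∞)` positive,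
convex, with `φ(t) → ∞` as `t → 0⁺`, and `C₁ ≥ 0`.  Then there is a monotone
`Φ : (0,∞) → (0,∞)` (depending only on `C₁`, `φ` and `Ω`) with `Φ(s) → 0` as `s → 0⁺`,
such that for every injective measurable `g : Ω → ℝⁿ` with Jacobian `Jg > 0` a.e.
satisfying the area formula `∫_A Jg = |g(A)|` and `∫_Ω φ(Jg) ≤ C₁`, one has
`Φ(|A|) ≤ |g(A)|` for each measurable `A ⊆ Ω`. -/
theorem stmt6 (n : ℕ) (Ω : Set (Fin n → ℝ)) (hΩopen : IsOpen Ω)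
    (hΩconn : IsConnected Ω) (hΩbd : Bornology.IsBounded Ω)
    (φ : ℝ → ℝ) (hφpos : ∀ t ∈ Ioi (0 : ℝ), 0 < φ t) (hφconv : ConvexOn ℝ (Ioi 0) φ)
    (hφ0 : Tendsto φ (𝓝[>] 0) atTop)
    (C₁ : ℝ) (hC₁ : 0 ≤ C₁) :
    ∃ Φ : ℝ≥0∞ → ℝ≥0∞, Monotone Φ ∧ (∀ s, 0 < s → 0 < Φ s) ∧
      Tendsto Φ (𝓝[>] 0) (𝓝 0) ∧
      ∀ (g : (Fin n → ℝ) → (Fin n → ℝ)) (Jg : (Fin n → ℝ) → ℝ),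
        Measurable g → Set.InjOn g Ω → Measurable Jg →
        (∀ᵐ x ∂(volume.restrict Ω), 0 < Jg x) →
        (∀ A : Set (Fin n → ℝ), A ⊆ Ω → MeasurableSet A →
          ∫⁻ x in A, ENNReal.ofReal (Jg x) = volume (g '' A)) →
        (∫⁻ x in Ω, ENNReal.ofReal (φ (Jg x)) ≤ ENNReal.ofReal C₁) →
        ∀ A : Set (Fin n → ℝ), A ⊆ Ω → MeasurableSet A →
          Φ (volume A) ≤ volume (g '' A) :=
  stmt6_general n Ω φ hφ0 C₁
end

section
/- Let A ⊆ ℝ^n be a bounded set of finite perimeter with |A| > 0. If A is written as a finite disjoint union of sets K₁,…,K_m of finite perimeter, each with |K_i| < 2ε, then |A| ≤ C ε^{1/n} ∑_{i=1}^m P(K_i, ℝ^n), where C depends only on n. -/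
open MeasureTheory Set Filter Topology
open scoped ENNReal

/-- The perimeter `P(A, ℝⁿ)` of a set `A ⊆ ℝⁿ`, defined in the distributional (Gauss–Green)
sense as the supremum of `∫_A div φ` over `C¹` compactly supported vector fields `φ` with
`‖φ‖ ≤ 1`; this is the total variation `|Dχ_A|(ℝⁿ)`. -/
noncomputable def perimeter (n : ℕ) (A : Set (Fin n → ℝ)) : ℝ≥0∞ :=
  ⨆ (φ : (Fin n → ℝ) → (Fin n → ℝ)) (_ : ContDiff ℝ 1 φ) (_ : HasCompactSupport φ)
    (_ : ∀ x, ‖φ x‖ ≤ 1),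
      ENNReal.ofReal (∫ x in A, ∑ i : Fin n, fderiv ℝ φ x (Pi.single i 1) i)

/-!
Every piece satisfies the isoperimetric inequality `|K|^(1 - 1/n) ≤ P(K)`, so
`|K| = |K|^(1/n) |K|^(1 - 1/n) ≤ (2ε)^(1/n) P(K) ≤ 2 ε^(1/n) P(K)`, and summing over the pieces
gives the claim with `C = 2`.

For the isoperimetric inequality, mollify: `uₖ = ρₖ ⋆ 1_K` is smooth with compact support and
`uₖ → 1_K` a.e. by Lebesgue differentiation. Since `Fin n → ℝ` carries the sup norm,
`‖Duₖ‖ ≤ ∑ᵢ |∂ᵢuₖ|`, and `∑ᵢ ∫ |∂ᵢuₖ| ≤ P(K)`: integrate by parts against the fields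
`(-(ρₖ ⋆ gᵢ))ᵢ`, with `gᵢ` a smoothed sign of `∂ᵢuₖ`, which are admissible in `P` because the
constraint `‖φ‖ ≤ 1` is in the sup norm too. The Gagliardo–Nirenberg–Sobolev inequality
`∫ |u|^(n/(n-1)) ≤ (∫ ‖Du‖)^(n/(n-1))` and Fatou's lemma for `n ≥ 2`, resp. `|u x| ≤ ∫ |u'|` at a
point `x ∈ K` where `uₖ x → 1` for `n = 1`, then give `|K|^(1 - 1/n) ≤ P(K)`.
-/

open Bornology ContinuousLinearMap
open scoped Convolution

noncomputable def smoothSign (η t : ℝ) : ℝ := t / √(t ^ 2 + η ^ 2)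

lemma abs_smoothSign_le_one (η t : ℝ) : |smoothSign η t| ≤ 1 := by
  rw [smoothSign, abs_div, abs_of_nonneg (Real.sqrt_nonneg _)]
  refine div_le_one_of_le₀ ?_ (Real.sqrt_nonneg _)
  rw [← Real.sqrt_sq_eq_abs]
  exact Real.sqrt_le_sqrt (le_add_of_nonneg_right (sq_nonneg η))

lemma smoothSign_zero (η : ℝ) : smoothSign η 0 = 0 := by simp [smoothSign]

lemma continuous_smoothSign {η : ℝ} (hη : η ≠ 0) : Continuous (smoothSign η) :=
  continuous_id.div (by fun_prop) fun t => (Real.sqrt_pos.2 (by positivity)).ne'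

lemma tendsto_smoothSign_mul_self (t : ℝ) :
    Tendsto (fun η => smoothSign η t * t) (𝓝 0) (𝓝 |t|) := by
  rcases eq_or_ne t 0 with rfl | ht
  · simp
  have hcont : ContinuousAt (fun η => smoothSign η t * t) 0 := by
    unfold smoothSign
    exact (continuousAt_const.div (by fun_prop) (by simp [Real.sqrt_eq_zero', ht])).mul
      continuousAt_const
  convert hcont.tendsto using 2
  rw [smoothSign, zero_pow two_ne_zero, add_zero, Real.sqrt_sq_eq_abs, div_mul_eq_mul_div,
    ← abs_mul_abs_self, mul_div_assoc, div_self (abs_ne_zero.2 ht), mul_one]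

lemma ofReal_sum_integral_abs_le {X ι : Type*} [TopologicalSpace X] [MeasurableSpace X]
    {μ : Measure X} [Fintype ι] {D : ι → X → ℝ} {c : ℝ≥0∞} (hDc : ∀ i, Continuous (D i))
    (hDs : ∀ i, HasCompactSupport (D i)) (hDi : ∀ i, Integrable (D i) μ)
    (h : ∀ g : ι → X → ℝ, (∀ i, Continuous (g i)) → (∀ i, HasCompactSupport (g i)) →
      (∀ i x, |g i x| ≤ 1) → ENNReal.ofReal (∑ i, ∫ x, g i x * D i x ∂μ) ≤ c) :
    ENNReal.ofReal (∑ i, ∫ x, |D i x| ∂μ) ≤ c := by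
  set η : ℕ → ℝ := fun j => 1 / (j + 1)
  have hη : Tendsto η atTop (𝓝 0) := tendsto_one_div_add_atTop_nhds_zero_nat
  have hlim : Tendsto (fun j => ∑ i, ∫ x, smoothSign (η j) (D i x) * D i x ∂μ) atTop
      (𝓝 (∑ i, ∫ x, |D i x| ∂μ)) := by
    refine tendsto_finsetSum _ fun i _ => tendsto_integral_of_dominated_convergence
      (fun x => |D i x|) (fun j => ?_) (hDi i).abs (fun j => ae_of_all _ fun x => ?_)
      (ae_of_all _ fun x => (tendsto_smoothSign_mul_self (D i x)).comp hη)
    · exact ((continuous_smoothSign (by positivity)).mul continuous_id).comp_aestronglyMeasurable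
        (hDi i).aestronglyMeasurable
    · rw [Real.norm_eq_abs, abs_mul]
      exact mul_le_of_le_one_left (abs_nonneg _) (abs_smoothSign_le_one _ _)
  refine le_of_tendsto' ((ENNReal.continuous_ofReal.tendsto _).comp hlim) fun j =>
    h (fun i x => smoothSign (η j) (D i x)) (fun i => ?_) (fun i => ?_)
      fun i x => abs_smoothSign_le_one _ _
  · exact (continuous_smoothSign (by positivity)).comp (hDc i)
  · exact (hDs i).comp_left (smoothSign_zero _)

lemma hasCompactSupport_pi {X ι : Type*} [TopologicalSpace X] [T2Space X] [Finite ι]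
    {M : ι → Type*} [∀ i, Zero (M i)] {f : X → ∀ i, M i}
    (hf : ∀ i, HasCompactSupport fun x => f x i) : HasCompactSupport f := by
  refine .of_support_subset_isCompact (isCompact_iUnion hf) fun x hx => ?_
  obtain ⟨i, hi⟩ := Function.ne_iff.1 hx
  exact mem_iUnion.2 ⟨i, subset_tsupport _ hi⟩

lemma norm_le_sum_norm_apply_single {ι F : Type*} [Fintype ι] [DecidableEq ι]
    [SeminormedAddCommGroup F] [NormedSpace ℝ F] (L : (ι → ℝ) →L[ℝ] F) :
    ‖L‖ ≤ ∑ i, ‖L (Pi.single i 1)‖ := by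
  refine L.opNorm_le_bound (by positivity) fun v => ?_
  calc ‖L v‖ = ‖∑ i, v i • L (Pi.single i 1)‖ := by
        conv_lhs => rw [← Finset.univ_sum_single v, map_sum]
        congr 2 with i
        rw [← L.map_smul, ← Pi.single_smul', smul_eq_mul, mul_one]
    _ ≤ ∑ i, ‖v‖ * ‖L (Pi.single i 1)‖ := by
        refine (norm_sum_le _ _).trans (Finset.sum_le_sum fun i _ => ?_)
        rw [norm_smul]
        gcongr
        exact norm_le_pi_norm v i
    _ = (∑ i, ‖L (Pi.single i 1)‖) * ‖v‖ := by simp_rw [Finset.sum_mul, mul_comm]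

section BoundedSet

variable {X : Type*} [MetricSpace X] [ProperSpace X] {K : Set X}

lemma integrable_indicator_one [MeasurableSpace X] {μ : Measure X} [IsFiniteMeasureOnCompacts μ]
    (hK : MeasurableSet K) (hKb : IsBounded K) : Integrable (K.indicator (1 : X → ℝ)) μ :=
  (integrable_indicator_iff hK).2 (integrableOn_const hKb.measure_lt_top.ne)

lemma hasCompactSupport_indicator_one (hKb : IsBounded K) :
    HasCompactSupport (K.indicator (1 : X → ℝ)) :=
  .of_support_subset_isCompact hKb.isCompact_closure (support_indicator_subset.trans subset_closure)

end BoundedSet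

section Mollifier

variable {E : Type*} [NormedAddCommGroup E] [NormedSpace ℝ E] [FiniteDimensional ℝ E]
  [MeasurableSpace E] {μ : Measure E}

namespace ContDiffBump

variable (b : ContDiffBump (0 : E))

lemma fderiv_normed_neg_apply (z v : E) :
    fderiv ℝ (b.normed μ) (-z) v = -fderiv ℝ (b.normed μ) z v := by
  have hcomp : HasFDerivAt (fun x => b.normed μ (-x))
      ((fderiv ℝ (b.normed μ) (-z)).comp (-ContinuousLinearMap.id ℝ E)) z :=
    ((b.contDiff_normed (n := 1)).differentiable one_ne_zero (-z)).hasFDerivAt.comp z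
      (hasFDerivAt_id z).neg
  simp_rw [b.normed_neg] at hcomp
  simp [hcomp.fderiv]

variable [BorelSpace E] [μ.IsAddHaarMeasure]

lemma integrable_fderiv_normed_apply (v : E) : Integrable (fun t => fderiv ℝ (b.normed μ) t v) μ :=
  ((b.contDiff_normed (n := 1)).continuous_fderiv one_ne_zero).clm_apply continuous_const
    |>.integrable_of_hasCompactSupport (b.hasCompactSupport_normed.fderiv_apply ℝ v)

variable [μ.IsNegInvariant]

lemma fderiv_normed_convolution_apply {g : E → ℝ} (hg : LocallyIntegrable g μ) (x v : E) :
    fderiv ℝ (b.normed μ ⋆[lsmul ℝ ℝ, μ] g) x v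
      = ((fun t => fderiv ℝ (b.normed μ) t v) ⋆[lsmul ℝ ℝ, μ] g) x := by
  have hint : ConvolutionExistsAt (fderiv ℝ (b.normed μ)) g x (precompL E (lsmul ℝ ℝ)) μ :=
    b.hasCompactSupport_normed.fderiv ℝ |>.convolutionExists_left _
      ((b.contDiff_normed (n := 1)).continuous_fderiv one_ne_zero) hg x
  rw [(b.hasCompactSupport_normed.hasFDerivAt_convolution_left _ b.contDiff_normed hg x).fderiv,
    convolution_def, ContinuousLinearMap.integral_apply hint, convolution_def]
  simp

end ContDiffBump

variable [BorelSpace E] [μ.IsAddHaarMeasure] [μ.IsNegInvariant]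

lemma integral_mul_convolution_of_odd {θ f g : E → ℝ} (hθ : Integrable θ μ)
    (hθ_odd : ∀ z, θ (-z) = -θ z) (hf : Integrable f μ) (hg : AEStronglyMeasurable g μ) {C : ℝ}
    (hgC : ∀ x, |g x| ≤ C) :
    ∫ x, g x * (θ ⋆[lsmul ℝ ℝ, μ] f) x ∂μ = -∫ s, f s * (θ ⋆[lsmul ℝ ℝ, μ] g) s ∂μ := by
  have hint : Integrable (fun p : E × E => g p.1 * (f p.2 * θ (p.1 - p.2))) (μ.prod μ) := by
    refine Integrable.bdd_mul (c := C) ?_ hg.comp_fst (ae_of_all _ fun p => hgC p.1)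
    simpa [mul_comm] using hf.convolution_integrand (lsmul ℝ ℝ) hθ
  calc ∫ x, g x * (θ ⋆[lsmul ℝ ℝ, μ] f) x ∂μ
      = ∫ x, ∫ s, g x * (f s * θ (x - s)) ∂μ ∂μ := by
        congr 1 with x
        rw [convolution_eq_swap, ← integral_const_mul]
        simp [mul_comm]
    _ = ∫ s, ∫ x, g x * (f s * θ (x - s)) ∂μ ∂μ := integral_integral_swap hint
    _ = -∫ s, f s * (θ ⋆[lsmul ℝ ℝ, μ] g) s ∂μ := by
        rw [← integral_neg]
        congr 1 with s
        rw [convolution_eq_swap, ← integral_const_mul, ← integral_neg]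
        congr 1 with x
        rw [lsmul_apply, smul_eq_mul, ← neg_sub, hθ_odd]
        ring

end Mollifier

section Perimeter

variable {n : ℕ} {K : Set (Fin n → ℝ)}

lemma ofReal_setIntegral_le_perimeter {φ : (Fin n → ℝ) → Fin n → ℝ} (hφ : ContDiff ℝ 1 φ) (hφs : HasCompactSupport φ)
    (hφb : ∀ x, ‖φ x‖ ≤ 1) :
    ENNReal.ofReal (∫ x in K, ∑ i, fderiv ℝ φ x (Pi.single i 1) i) ≤ perimeter n K :=
  le_iSup₂_of_le φ hφ <| le_iSup₂_of_le (f := fun _ _ => _) hφs hφb le_rfl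

variable (b : ContDiffBump (0 : Fin n → ℝ))

lemma ofReal_sum_integral_mul_fderiv_le_perimeter (hK : MeasurableSet K) (hKb : IsBounded K)
    {g : Fin n → (Fin n → ℝ) → ℝ} (hgc : ∀ i, Continuous (g i))
    (hgs : ∀ i, HasCompactSupport (g i)) (hgb : ∀ i x, |g i x| ≤ 1) :
    ENNReal.ofReal (∑ i, ∫ x, g i x *
      fderiv ℝ (b.normed volume ⋆[lsmul ℝ ℝ, volume] K.indicator 1) x (Pi.single i 1))
      ≤ perimeter n K := by
  set w : Fin n → (Fin n → ℝ) → ℝ := fun i => b.normed volume ⋆[lsmul ℝ ℝ, volume] g i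
  have hw : ∀ i, ContDiff ℝ 1 (w i) := fun i =>
    b.hasCompactSupport_normed.contDiff_convolution_left _ b.contDiff_normed
      (hgc i).locallyIntegrable
  have hwb : ∀ i x, ‖-w i x‖ ≤ 1 := fun i x => by
    have := dist_convolution_le (μ := volume) (x₀ := x) (z₀ := (0 : ℝ)) zero_le_one
      b.support_normed_eq.subset b.nonneg_normed b.integral_normed (hgc i).aestronglyMeasurable
      fun y _ => by rw [Real.dist_eq, sub_zero]; exact hgb i y
    rwa [dist_zero_right, ← norm_neg] at this
  refine le_of_eq_of_le ?_ (ofReal_setIntegral_le_perimeter (φ := fun x i => -w i x)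
    (contDiff_pi.2 fun i => (hw i).neg)
    (hasCompactSupport_pi fun i => (b.hasCompactSupport_normed.convolution _ (hgs i)).neg)
    fun x => (pi_norm_le_iff_of_nonneg zero_le_one).2 fun i => hwb i x)
  have hχ : Integrable (K.indicator 1) := integrable_indicator_one hK hKb
  have hparts : ∀ i, ∫ x, g i x *
      fderiv ℝ (b.normed volume ⋆[lsmul ℝ ℝ, volume] K.indicator 1) x (Pi.single i 1)
      = ∫ s in K, -fderiv ℝ (w i) s (Pi.single i 1) := fun i => by
    simp_rw [b.fderiv_normed_convolution_apply hχ.locallyIntegrable]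
    rw [integral_mul_convolution_of_odd (b.integrable_fderiv_normed_apply _)
      (b.fderiv_normed_neg_apply · _) hχ (hgc i).aestronglyMeasurable (hgb i), ← integral_neg,
      ← integral_indicator hK]
    congr 1 with s
    by_cases hs : s ∈ K <;>
      simp [hs, w, b.fderiv_normed_convolution_apply (hgc i).locallyIntegrable]
  have hdiv : ∀ x, ∑ i, fderiv ℝ (fun x i => -w i x) x (Pi.single i 1) i
      = ∑ i, -fderiv ℝ (w i) x (Pi.single i 1) := fun x => by
    rw [fderiv_pi (φ := fun i x => -w i x) fun i => ((hw i).differentiable one_ne_zero x).neg]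
    simp
  simp_rw [hparts, hdiv]
  rw [integral_finsetSum _ fun i _ => ?_]
  exact (((hw i).continuous_fderiv one_ne_zero).clm_apply continuous_const
    |>.integrable_of_hasCompactSupport
      ((b.hasCompactSupport_normed.convolution _ (hgs i)).fderiv_apply ℝ _)).neg.integrableOn

lemma lintegral_enorm_fderiv_convolution_indicator_le_perimeter (hK : MeasurableSet K)
    (hKb : IsBounded K) :
    ∫⁻ x, ‖fderiv ℝ (b.normed volume ⋆[lsmul ℝ ℝ, volume] K.indicator (1 : (Fin n → ℝ) → ℝ)) x‖ₑ
      ≤ perimeter n K := by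
  set u := b.normed volume ⋆[lsmul ℝ ℝ, volume] K.indicator (1 : (Fin n → ℝ) → ℝ)
  have hu : ContDiff ℝ 1 u := b.hasCompactSupport_normed.contDiff_convolution_left _
    b.contDiff_normed (integrable_indicator_one hK hKb).locallyIntegrable
  set D : Fin n → (Fin n → ℝ) → ℝ := fun i x => fderiv ℝ u x (Pi.single i 1)
  have hDc : ∀ i, Continuous (D i) := fun i =>
    (hu.continuous_fderiv one_ne_zero).clm_apply continuous_const
  have hDs : ∀ i, HasCompactSupport (D i) := fun i =>
    (b.hasCompactSupport_normed.convolution _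
      (hasCompactSupport_indicator_one hKb)).fderiv_apply ℝ _
  have hDi : ∀ i, Integrable (D i) := fun i => (hDc i).integrable_of_hasCompactSupport (hDs i)
  calc ∫⁻ x, ‖fderiv ℝ u x‖ₑ
      ≤ ∫⁻ x, ∑ i, ‖D i x‖ₑ := lintegral_mono fun x => by
        simp_rw [← ofReal_norm, ← ENNReal.ofReal_sum_of_nonneg fun i _ => norm_nonneg (D i x)]
        exact ENNReal.ofReal_le_ofReal (norm_le_sum_norm_apply_single _)
    _ = ∑ i, ∫⁻ x, ‖D i x‖ₑ := lintegral_finsetSum' _ fun i _ => (hDc i).enorm.aemeasurable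
    _ = ENNReal.ofReal (∑ i, ∫ x, |D i x|) := by
        rw [ENNReal.ofReal_sum_of_nonneg fun i _ => integral_nonneg fun x => abs_nonneg _]
        simp_rw [← Real.norm_eq_abs, ofReal_integral_norm_eq_lintegral_enorm (hDi _)]
    _ ≤ perimeter n K := ofReal_sum_integral_abs_le hDc hDs hDi fun g hgc hgs hgb =>
        ofReal_sum_integral_mul_fderiv_le_perimeter b hK hKb hgc hgs hgb

end Perimeter

section Isoperimetric

variable {n : ℕ} {K : Set (Fin n → ℝ)}

noncomputable def shrinkingBump (n k : ℕ) : ContDiffBump (0 : Fin n → ℝ) where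
  rIn := 1 / (k + 1)
  rOut := 2 / (k + 1)
  rIn_pos := by positivity
  rIn_lt_rOut := by gcongr; norm_num

lemma exists_contDiff_tendsto_indicator (hK : MeasurableSet K) (hKb : IsBounded K) :
    ∃ u : ℕ → (Fin n → ℝ) → ℝ, (∀ k, ContDiff ℝ 1 (u k)) ∧ (∀ k, HasCompactSupport (u k)) ∧
      (∀ k, ∫⁻ x, ‖fderiv ℝ (u k) x‖ₑ ≤ perimeter n K) ∧
      ∀ᵐ x, Tendsto (fun k => u k x) atTop (𝓝 (K.indicator 1 x)) := by
  have hχ := (integrable_indicator_one (μ := volume) hK hKb).locallyIntegrable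
  refine ⟨fun k => (shrinkingBump n k).normed volume ⋆[lsmul ℝ ℝ, volume] K.indicator 1,
    fun k => (shrinkingBump n k).hasCompactSupport_normed.contDiff_convolution_left _
      (shrinkingBump n k).contDiff_normed hχ,
    fun k => (shrinkingBump n k).hasCompactSupport_normed.convolution _
      (hasCompactSupport_indicator_one hKb),
    fun k => lintegral_enorm_fderiv_convolution_indicator_le_perimeter _ hK hKb,
    ContDiffBump.ae_convolution_tendsto_right_of_locallyIntegrable (K := 2) ?_
      (Eventually.of_forall fun k => le_of_eq ?_) hχ⟩
  · simpa [shrinkingBump, div_eq_mul_inv] using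
      (tendsto_one_div_add_atTop_nhds_zero_nat (𝕜 := ℝ)).const_mul 2
  · simp [shrinkingBump, div_eq_mul_inv]

lemma enorm_le_lintegral_enorm_fderiv_of_fin_one {F : Type*} [NormedAddCommGroup F]
    [NormedSpace ℝ F] {u : (Fin 1 → ℝ) → F} (hu : ContDiff ℝ 1 u) (h2u : HasCompactSupport u)
    (x : Fin 1 → ℝ) :
    ‖u x‖ₑ ≤ ∫⁻ y, ‖fderiv ℝ u y‖ₑ := by
  have hupdate : ∀ t, Function.update x 0 t = (MeasurableEquiv.funUnique (Fin 1) ℝ).symm t :=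
    fun t => funext fun i => by simp [Subsingleton.elim i 0]
  calc ‖u x‖ₑ ≤ ∫⁻ t in Iic (x 0), ‖deriv (u ∘ Function.update x 0) t‖ₑ := by
        refine le_trans (by simp) (HasCompactSupport.enorm_le_lintegral_Ici_deriv
          (hu.comp (contDiff_update 1 x 0)) (h2u.comp_isClosedEmbedding
          (isClosedEmbedding_update x 0)) _)
    _ ≤ ∫⁻ t, ‖fderiv ℝ u (Function.update x 0 t)‖ₑ := by
        refine lintegral_mono' Measure.restrict_le_self fun t => ?_
        rw [fderiv_comp_deriv _ (hu.differentiable one_ne_zero).differentiableAt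
          (hasDerivAt_update x 0 t).differentiableAt, deriv_update]
        exact (ContinuousLinearMap.le_opENorm _ _).trans (by simp [Pi.enorm_single])
    _ = ∫⁻ y, ‖fderiv ℝ u y‖ₑ := by
        simp_rw [hupdate]
        exact (volume_preserving_funUnique (Fin 1) ℝ).symm.lintegral_comp_emb
          (MeasurableEquiv.measurableEmbedding _) fun y => ‖fderiv ℝ u y‖ₑ

lemma one_le_perimeter {K : Set (Fin 1 → ℝ)} (hK : MeasurableSet K) (hKb : IsBounded K)
    (hK0 : 0 < volume K) : 1 ≤ perimeter 1 K := by
  obtain ⟨u, hu, hus, huK, hlim⟩ := exists_contDiff_tendsto_indicator hK hKb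
  have : (ae (volume.restrict K)).NeBot :=
    ae_neBot.2 (Measure.restrict_eq_zero.not.2 hK0.ne')
  obtain ⟨x, hxK, hx⟩ := ((ae_restrict_mem hK).and (ae_restrict_of_ae hlim)).exists
  rw [indicator_of_mem hxK, Pi.one_apply] at hx
  simpa using le_of_tendsto' ((continuous_enorm.tendsto _).comp hx) fun k =>
    (enorm_le_lintegral_enorm_fderiv_of_fin_one (hu k) (hus k) x).trans (huK k)

lemma volume_le_perimeter_rpow (hn : 2 ≤ n) (hK : MeasurableSet K) (hKb : IsBounded K) :
    volume K ≤ perimeter n K ^ ((n : ℝ) / (n - 1)) := by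
  obtain ⟨u, hu, hus, huK, hlim⟩ := exists_contDiff_tendsto_indicator hK hKb
  set p : ℝ := n / (n - 1)
  have hp : Real.HolderConjugate (Fintype.card (Fin n)) p := by
    rw [Fintype.card_fin]
    exact .conjExponent (by exact_mod_cast hn)
  have hχ : ∀ x, ‖K.indicator (1 : (Fin n → ℝ) → ℝ) x‖ₑ ^ p = K.indicator 1 x := fun x => by
    by_cases hx : x ∈ K <;> simp [hx, hp.symm.pos]
  calc volume K = ∫⁻ x, ‖K.indicator (1 : (Fin n → ℝ) → ℝ) x‖ₑ ^ p := by
        simp_rw [hχ, lintegral_indicator_one hK]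
    _ = ∫⁻ x, liminf (fun k => ‖u k x‖ₑ ^ p) atTop := lintegral_congr_ae <| hlim.mono fun x hx =>
        (((ENNReal.continuous_rpow_const.tendsto _).comp
          ((continuous_enorm.tendsto _).comp hx)).liminf_eq).symm
    _ ≤ liminf (fun k => ∫⁻ x, ‖u k x‖ₑ ^ p) atTop :=
        lintegral_liminf_le' fun k => ((hu k).continuous.measurable.enorm.pow_const p).aemeasurable
    _ ≤ perimeter n K ^ p := liminf_le_of_frequently_le' <| Frequently.of_forall fun k =>
        (lintegral_pow_le_pow_lintegral_fderiv_aux hp (hu k) (hus k)).trans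
          (ENNReal.rpow_le_rpow (huK k) hp.symm.nonneg)

lemma volume_rpow_le_perimeter (hn : 1 ≤ n) (hK : MeasurableSet K) (hKb : IsBounded K)
    (hK0 : 0 < volume K) : volume K ^ (1 - 1 / (n : ℝ)) ≤ perimeter n K := by
  obtain rfl | hn2 : n = 1 ∨ 2 ≤ n := by omega
  · simpa using one_le_perimeter hK hKb hK0
  have hn1 : (1 : ℝ) < n := by exact_mod_cast hn2
  calc volume K ^ (1 - 1 / (n : ℝ))
      ≤ (perimeter n K ^ ((n : ℝ) / (n - 1))) ^ (1 - 1 / (n : ℝ)) :=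
        ENNReal.rpow_le_rpow (volume_le_perimeter_rpow hn2 hK hKb)
          (sub_nonneg.2 (div_le_one_of_le₀ hn1.le (by positivity)))
    _ = perimeter n K := by
        rw [← ENNReal.rpow_mul]
        convert ENNReal.rpow_one _
        field_simp
        exact div_self (sub_ne_zero.2 hn1.ne')

end Isoperimetric

lemma volume_le_two_mul_rpow_mul_perimeter {n : ℕ} (hn : 1 ≤ n) {K : Set (Fin n → ℝ)}
    (hK : MeasurableSet K) (hKb : IsBounded K) {ε : ℝ} (hε : 0 < ε)
    (hKε : volume K < ENNReal.ofReal (2 * ε)) :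
    volume K ≤ ENNReal.ofReal (2 * ε ^ ((1 : ℝ) / n)) * perimeter n K := by
  rcases eq_or_ne (volume K) 0 with hK0 | hK0
  · simp [hK0]
  have h2 : (2 : ℝ) ^ ((1 : ℝ) / n) ≤ 2 := Real.rpow_le_self_of_one_le one_le_two
    (div_le_one_of_le₀ (by exact_mod_cast hn) (Nat.cast_nonneg n))
  calc volume K = volume K ^ ((1 : ℝ) / n) * volume K ^ (1 - 1 / (n : ℝ)) := by
        rw [← ENNReal.rpow_add _ _ hK0 (ne_top_of_lt hKε), add_sub_cancel, ENNReal.rpow_one]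
    _ ≤ ENNReal.ofReal (2 * ε) ^ ((1 : ℝ) / n) * perimeter n K := by
        gcongr
        exact volume_rpow_le_perimeter hn hK hKb (pos_iff_ne_zero.2 hK0)
    _ = ENNReal.ofReal (2 ^ ((1 : ℝ) / n) * ε ^ ((1 : ℝ) / n)) * perimeter n K := by
        rw [ENNReal.ofReal_rpow_of_nonneg (by positivity) (by positivity),
          Real.mul_rpow zero_le_two hε.le]
    _ ≤ ENNReal.ofReal (2 * ε ^ ((1 : ℝ) / n)) * perimeter n K := by
        gcongr

/-- there is `C = C(n) > 0` such that: if a bounded set `A ⊆ ℝⁿ` of finite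
perimeter with `|A| > 0` is a finite disjoint union of sets `K₁, …, K_m` of finite
perimeter, each of measure `< 2ε`, then `|A| ≤ C ε^{1/n} ∑ᵢ P(Kᵢ, ℝⁿ)`. -/
theorem stmt8 (n : ℕ) (hn : 1 ≤ n) :
    ∃ C : ℝ, 0 < C ∧
      ∀ (A : Set (Fin n → ℝ)), MeasurableSet A → Bornology.IsBounded A →
        perimeter n A < ⊤ → 0 < volume A →
        ∀ (ε : ℝ), 0 < ε →
        ∀ (m : ℕ) (K : Fin m → Set (Fin n → ℝ)),
          (∀ i, MeasurableSet (K i)) →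
          (Pairwise (Function.onFun Disjoint K)) →
          (A = ⋃ i : Fin m, K i) →
          (∀ i, perimeter n (K i) < ⊤) →
          (∀ i, volume (K i) < ENNReal.ofReal (2 * ε)) →
          volume A ≤ ENNReal.ofReal (C * ε ^ ((1 : ℝ) / n)) *
            ∑ i : Fin m, perimeter n (K i) := by
  refine ⟨2, two_pos, ?_⟩
  rintro A - hAb - - ε hε m K hKm hKd rfl - hKε
  rw [measure_iUnion hKd hKm, tsum_fintype, Finset.mul_sum]
  exact Finset.sum_le_sum fun i _ => volume_le_two_mul_rpow_mul_perimeter hn (hKm i)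
    (hAb.subset (subset_iUnion K i)) hε (hKε i)
end
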